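/- Let σ_k : ℝ^d → ℝ^d, k ∈ ℕ, be C¹ vector fields such that the series Q^{αβ}(x,y) := Σ_k σ_k^α(x)σ_k^β(y) and its first derivatives converge suitably. Then for每 every α = 1,…,d and x ∈ ℝ^d: Σ_{k=1}^∞ Σ_{β=1}^d σ_k^β(x) ∂_β σ_k^α(x) = Σ_{β=1}^d (∂_β Q^{αβ})(x,x) − Σ_{k=1}^∞ σ_k^α(x) div σ_k(x), where ∂_β Q^{αβ}(x,x) denotes the derivative in the second variable evaluated on the diagonal. In particular, if every σ_k is divergence free and the diagonal values Q^{αβ}(x,x) are constant in x (e.g. Q^{αβ}(x,x) = δ_{αβ}), then the Stratonovich–Itô correction vanishes: Σ_{k=1}^∞ (Dσ_k · σ_k)(x) = 0 for all x ∈ ℝ^d. -/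

import Mathlib

open MeasureTheory ProbabilityTheory Filter Set
open scoped ENNReal NNReal Topology

noncomputable section

/-- Euclidean space `ℝ^d`. -/
abbrev Vec (d : ℕ) := EuclideanSpace ℝ (Fin d)

section Defs

variable {Ω : Type} {m : MeasurableSpace Ω} {d : ℕ}

/-- `B` is a standard one-dimensional Brownian motion with respect to the filtration `F`:
it is adapted, starts at `0`, has continuous paths, and its increments are Gaussian and
independent of the past. -/
def IsBrownian (μ : Measure Ω) (F : Filtration ℝ m) (B : ℝ → Ω → ℝ) : Prop :=
  Adapted F B ∧ (∀ ω, B 0 ω = 0) ∧ (∀ ω, Continuous fun t => B t ω) ∧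
    ∀ s t : ℝ, 0 ≤ s → s ≤ t →
      Measure.map (fun ω => B t ω - B s ω) μ = gaussianReal 0 (t - s).toNNReal ∧
      Indep (MeasurableSpace.comap (fun ω => B t ω - B s ω) inferInstance) (F s) μ

/-- A family of independent Brownian motions. -/
def IsIndepBrownianFamily (μ : Measure Ω) (F : Filtration ℝ m) (B : ℕ → ℝ → Ω → ℝ) : Prop :=
  (∀ k, IsBrownian μ F (B k)) ∧
    iIndepFun (fun k ω => fun t : ℝ => B k t ω) μ

/-- Left-endpoint Riemann sums along the dyadic partition of `[0,t]` for the stochastic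
integral `∫₀ᵗ f dB`. -/
def itoRiemann {E : Type} [NormedAddCommGroup E] [NormedSpace ℝ E]
    (f : ℝ → Ω → E) (B : ℝ → Ω → ℝ) (t : ℝ) (n : ℕ) (ω : Ω) : E :=
  ∑ i ∈ Finset.range (2 ^ n),
    (B (t * (i + 1) / 2 ^ n) ω - B (t * i / 2 ^ n) ω) • f (t * i / 2 ^ n) ω

/-- `I` is (a version of) the Itô integral `t ↦ ∫₀ᵗ f dB`: for each `t ≥ 0`, the dyadic
left-endpoint Riemann sums converge in probability (in measure) to `I t`. -/
def IsItoIntegral {E : Type} [NormedAddCommGroup E] [NormedSpace ℝ E]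
    (μ : Measure Ω) (f : ℝ → Ω → E) (B : ℝ → Ω → ℝ) (I : ℝ → Ω → E) : Prop :=
  ∀ t : ℝ, 0 ≤ t → TendstoInMeasure μ (fun n => itoRiemann f B t n) atTop (I t)

/-- `X` is a (strong) solution of the SDE `dX_t = b(t, X_t) dt + ∑ₖ σₖ(X_t) dB_t^k`. -/
def SolvesSDE (μ : Measure Ω) (F : Filtration ℝ m) (B : ℕ → ℝ → Ω → ℝ)
    (b : ℝ → Vec d → Ω → Vec d) (σs : ℕ → Vec d → Vec d) (X : ℝ → Ω → Vec d) : Prop :=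
  Adapted F X ∧ (∀ᵐ ω ∂μ, Continuous fun t => X t ω) ∧
    ∃ I : ℕ → ℝ → Ω → Vec d,
      (∀ k, IsItoIntegral μ (fun s ω => σs k (X s ω)) (B k) (I k)) ∧
      ∀ t : ℝ, 0 ≤ t → ∀ᵐ ω ∂μ,
        (Summable fun k => I k t ω) ∧
        X t ω = X 0 ω + (∫ s in Ioc (0 : ℝ) t, b s (X s ω) ω) + ∑' k, I k t ω

/-- The interacting particle system subject to the common environmental noise `B`:
`dX_t^{i} = (1/N) ∑_j K(X_t^{i} - X_t^{j}) dt + ∑ₖ σₖ(X_t^i) dB_t^k`. -/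
def SolvesParticleSystem (μ : Measure Ω) (F : Filtration ℝ m) (B : ℕ → ℝ → Ω → ℝ)
    (K : Vec d → Vec d) (σs : ℕ → Vec d → Vec d) {N : ℕ}
    (X : Fin N → ℝ → Ω → Vec d) : Prop :=
  ∀ i, SolvesSDE μ F B (fun t x ω => (N : ℝ)⁻¹ • ∑ j, K (x - X j t ω)) σs (X i)

/-- The empirical measure `S_t^N = (1/N) ∑ᵢ δ_{X_t^{i,N}}`. -/
def empMeas {N : ℕ} (X : Fin N → ℝ → Ω → Vec d) (t : ℝ) (ω : Ω) : Measure (Vec d) :=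
  ((N : ℝ≥0)⁻¹) • ∑ j, Measure.dirac (X j t ω)

/-- Couplings of two measures: measures on the product with the prescribed marginals. -/
def Couplings {E : Type} [MeasurableSpace E] (μ ν : Measure E) : Set (Measure (E × E)) :=
  {π | π.map Prod.fst = μ ∧ π.map Prod.snd = ν}

/-- The 1-Wasserstein distance `W₁(μ,ν) = inf over couplings of ∫ dist(x,y) dm(x,y)`. -/
def W1 {E : Type} [MeasurableSpace E] [PseudoMetricSpace E] (μ ν : Measure E) : ℝ :=
  sInf ((fun π : Measure (E × E) => ∫ p, dist p.1 p.2 ∂π) '' Couplings μ ν)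

/-- The squared 2-Wasserstein distance. -/
def W2sq {E : Type} [MeasurableSpace E] [PseudoMetricSpace E] (μ ν : Measure E) : ℝ :=
  sInf ((fun π : Measure (E × E) => ∫ p, dist p.1 p.2 ^ 2 ∂π) '' Couplings μ ν)

/-- The interaction drift `b_ν(x) = ∫ K(x-y) ν(dy)`. -/
def bK (K : Vec d → Vec d) (ν : Measure (Vec d)) (x : Vec d) : Vec d :=
  ∫ y, K (x - y) ∂ν

/-- Bounded continuous real function. -/
def BddCont {E : Type} [TopologicalSpace E] (φ : E → ℝ) : Prop :=
  Continuous φ ∧ ∃ C, ∀ x, |φ x| ≤ C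

/-- `C_b²` test function: twice continuously differentiable, bounded together with its
derivatives up to order two. -/
def Cb2 {d : ℕ} (φ : Vec d → ℝ) : Prop :=
  ContDiff ℝ 2 φ ∧ ∀ i : ℕ, i ≤ 2 → ∃ C, ∀ x, ‖iteratedFDeriv ℝ i φ x‖ ≤ C

/-- The Laplacian `Δφ(x) = ∑ᵢ ∂²φ/∂xᵢ²`. -/
def lapl {d : ℕ} (φ : Vec d → ℝ) (x : Vec d) : ℝ :=
  ∑ i, iteratedFDeriv ℝ 2 φ x ![EuclideanSpace.single i 1, EuclideanSpace.single i 1]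

/-- `ρ` is a measure-valued solution of the stochastic PDE
`dρ_t + div((bf) ρ_t) dt + ∑ₖ div(σₖ ρ_t) dB_t^k = (1/2) Δρ_t dt`, in the weak
(distributional) sense: for every `C_b²` test function `φ`,
`⟨ρ_t,φ⟩ = ⟨ρ_0,φ⟩ + ∫₀ᵗ ⟨ρ_s, bf·∇φ⟩ ds + (1/2)∫₀ᵗ ⟨ρ_s, Δφ⟩ ds + ∑ₖ ∫₀ᵗ ⟨ρ_s, σₖ·∇φ⟩ dB_s^k`. -/
def IsMVSol (μP : Measure Ω) (F : Filtration ℝ m) (B : ℕ → ℝ → Ω → ℝ)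
    (σs : ℕ → Vec d → Vec d) (bf : ℝ → Ω → Vec d → Vec d)
    (ρ : ℝ → Ω → Measure (Vec d)) : Prop :=
  (∀ t ω, IsProbabilityMeasure (ρ t ω)) ∧
  (∀ t ω, Integrable (fun x => ‖x‖) (ρ t ω)) ∧
  (∀ φ : Vec d → ℝ, BddCont φ →
    Adapted F (fun t ω => ∫ x, φ x ∂(ρ t ω)) ∧
    ∀ᵐ ω ∂μP, Continuous fun t => ∫ x, φ x ∂(ρ t ω)) ∧
  ∀ φ : Vec d → ℝ, Cb2 φ →
    ∃ J : ℕ → ℝ → Ω → ℝ,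
      (∀ k, IsItoIntegral μP (fun s ω => ∫ x, fderiv ℝ φ x (σs k x) ∂(ρ s ω)) (B k) (J k)) ∧
      ∀ t : ℝ, 0 ≤ t → ∀ᵐ ω ∂μP,
        (Summable fun k => J k t ω) ∧
        ∫ x, φ x ∂(ρ t ω) = (∫ x, φ x ∂(ρ 0 ω))
          + (∫ s in Ioc (0 : ℝ) t, ∫ x, fderiv ℝ φ x (bf s ω x) ∂(ρ s ω))
          + (1 / 2) * (∫ s in Ioc (0 : ℝ) t, ∫ x, lapl φ x ∂(ρ s ω))
          + ∑' k, J k t ω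

/-- Measure-valued solution of the nonlinear stochastic PDE
`dρ_t + div(b_{ρ_t} ρ_t) dt + ∑ₖ div(σₖ ρ_t) dB_t^k = (1/2) Δρ_t dt`,
where `b_ν(x) = ∫ K(x-y) ν(dy)`. -/
def IsMVSolNL (μP : Measure Ω) (F : Filtration ℝ m) (B : ℕ → ℝ → Ω → ℝ)
    (K : Vec d → Vec d) (σs : ℕ → Vec d → Vec d) (ρ : ℝ → Ω → Measure (Vec d)) : Prop :=
  IsMVSol μP F B σs (fun s ω x => bK K (ρ s ω) x) ρ

/-- Hypothesis on the noise (Hypothesis 1 of the paper): the fields `σₖ` are `C²`,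
divergence free, square-summable, and the covariance `Q^{ij}(x,y) = ∑ₖ σₖ^i(x) σₖ^j(y)` is
space homogeneous, `Q(0) = Id`, and `Q` is `C²` with uniformly bounded second derivatives. -/
def NoiseHypothesis {d : ℕ} (σs : ℕ → Vec d → Vec d) : Prop :=
  (∀ x, Summable fun k => ‖σs k x‖ ^ 2) ∧
  (∀ k, ContDiff ℝ 2 (σs k)) ∧
  (∀ k x, ∑ i, fderiv ℝ (fun y => σs k y i) x (EuclideanSpace.single i 1) = 0) ∧
  ∃ Q : Vec d → Fin d → Fin d → ℝ,
    (∀ x y i j, HasSum (fun k => σs k x i * σs k y j) (Q (x - y) i j)) ∧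
    (∀ i j, Q 0 i j = if i = j then (1 : ℝ) else 0) ∧
    ContDiff ℝ 2 Q ∧
    ∃ C, ∀ x, ‖iteratedFDeriv ℝ 2 Q x‖ ≤ C

/-- `Lσ` is a Lipschitz constant for the noise: `∑ₖ |σₖ(x) - σₖ(y)|² ≤ Lσ² |x-y|²`. -/
def NoiseLipschitz {d : ℕ} (σs : ℕ → Vec d → Vec d) (Lσ : ℝ) : Prop :=
  ∀ x y, (∑' k, ‖σs k x - σs k y‖ ^ 2) ≤ Lσ ^ 2 * ‖x - y‖ ^ 2

/-- The process `ρ` belongs to the space `𝒮`: adapted, probability-measure valued, with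
`E[sup_{t∈[0,T]} ∫ |x| dρ_t(x)] < ∞`. -/
def MemS (μP : Measure Ω) (F : Filtration ℝ m) (T : ℝ)
    (ρ : ℝ → Ω → Measure (Vec d)) : Prop :=
  (∀ t ω, IsProbabilityMeasure (ρ t ω)) ∧
  (∀ φ : Vec d → ℝ, BddCont φ → Adapted F (fun t ω => ∫ x, φ x ∂(ρ t ω))) ∧
  (∫⁻ ω, ⨆ t : Icc (0 : ℝ) T, ∫⁻ x, ‖x‖₊ ∂(ρ (t : ℝ) ω) ∂μP) < ⊤

/-- The distance `d_𝒮(μ,ν) = E[sup_{t∈[0,T]} W₁(μ_t, ν_t)]` on `𝒮`. -/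
def dS (μP : Measure Ω) (T : ℝ) (ρ ρ' : ℝ → Ω → Measure (Vec d)) : ℝ :=
  ∫ ω, ⨆ t : Icc (0 : ℝ) T, W1 (ρ (t : ℝ) ω) (ρ' (t : ℝ) ω) ∂μP

/-- A stochastic flow of solutions of the SDE `dX = b dt + ∑ₖ σₖ dB^k`: for each starting
point `x`, `t ↦ X t x` is a solution starting at `x`, and the flow is continuous in `x`. -/
def IsFlow (μP : Measure Ω) (F : Filtration ℝ m) (B : ℕ → ℝ → Ω → ℝ)
    (b : ℝ → Vec d → Ω → Vec d) (σs : ℕ → Vec d → Vec d)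
    (X : ℝ → Vec d → Ω → Vec d) : Prop :=
  (∀ x, SolvesSDE μP F B b σs (fun t ω => X t x ω)) ∧
  (∀ x ω, X 0 x ω = x) ∧
  (∀ t ω, Continuous fun x => X t x ω)

/-- The initial condition hypothesis: `μ0` is an `ℱ₀`-measurable random probability
measure with `E[∫ |x| dμ0(x)] < ∞`. -/
def GoodInit (μP : Measure Ω) (F : Filtration ℝ m) (μ0 : Ω → Measure (Vec d)) : Prop :=
  (∀ ω, IsProbabilityMeasure (μ0 ω)) ∧
  (∀ A : Set (Vec d), MeasurableSet A → Measurable[F 0] fun ω => (μ0 ω A).toReal) ∧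
  (∫⁻ ω, ∫⁻ x, ‖x‖₊ ∂(μ0 ω) ∂μP) < ⊤

/-- `ρ` is the measure-valued solution of the nonlinear stochastic PDE starting from `μ0`
constructed by the contraction (fixed point of the push-forward operator `Φ_{μ0}`) method:
it lies in `𝒮`, solves the SPDE, starts from `μ0`, and is represented as the push forward
of `μ0` by the flow of the SDE `dX = b_{ρ_t}(X) dt + ∑ₖ σₖ(X) dB^k`. -/
def IsContractionSolution (μP : Measure Ω) (F : Filtration ℝ m) (B : ℕ → ℝ → Ω → ℝ)
    (K : Vec d → Vec d) (σs : ℕ → Vec d → Vec d) (T : ℝ)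
    (μ0 : Ω → Measure (Vec d)) (ρ : ℝ → Ω → Measure (Vec d)) : Prop :=
  MemS μP F T ρ ∧ IsMVSolNL μP F B K σs ρ ∧ (∀ᵐ ω ∂μP, ρ 0 ω = μ0 ω) ∧
  ∃ X : ℝ → Vec d → Ω → Vec d,
    IsFlow μP F B (fun s y ω => bK K (ρ s ω) y) σs X ∧
    ∀ t ∈ Icc (0 : ℝ) T, ∀ᵐ ω ∂μP, ρ t ω = (μ0 ω).map fun x => X t x ω

/-- The σ-algebra `ℱ_t^B` generated by the Brownian motions up to time `t`. -/
def brownFiltration (B : ℕ → ℝ → Ω → ℝ) (t : ℝ) : MeasurableSpace Ω :=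
  MeasurableSpace.comap (fun ω => fun p : ℕ × Icc (0 : ℝ) t => B p.1 (p.2 : ℝ) ω) inferInstance

/-- `Q` is the quadratic variation of the continuous martingale `M`: it is adapted,
continuous, null at zero, nondecreasing, and `M² - Q` is a martingale. -/
def IsQuadVar (F : Filtration ℝ m) (μ : Measure Ω) (M Q : ℝ → Ω → ℝ) : Prop :=
  Adapted F Q ∧ (∀ ω, Continuous fun t => Q t ω) ∧ (∀ ω, Q 0 ω = 0) ∧
  (∀ ω, MonotoneOn (fun t => Q t ω) (Ici 0)) ∧
  Martingale (fun t ω => M t ω ^ 2 - Q t ω) F μ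

/-- `Cp` is a constant for which the conditional Burkholder–Davis–Gundy inequality with
exponent `p` holds on the given filtered probability space. -/
def CondBDGConst (μP : Measure Ω) (F : Filtration ℝ m) (p Cp : ℝ) : Prop :=
  0 < Cp ∧
  ∀ M Q : ℝ → Ω → ℝ, Martingale M F μP → (∀ ω, Continuous fun t => M t ω) →
    IsQuadVar F μP M Q → ∀ t : ℝ, 0 ≤ t →
    ∀ᵐ ω ∂μP,
      (μP[fun ω' => (⨆ s : Icc (0 : ℝ) t, |M (s : ℝ) ω'|) ^ p | F 0]) ω ≤
      Cp * (μP[fun ω' => Q t ω' ^ (p / 2) | F 0]) ω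

/-- The constant `C(p,t) = C_p t^{1/(2p)} L_σ + t^{1/p} L_b`. -/
def Cconst (Cp Lσ Lb p t : ℝ) : ℝ := Cp * t ^ (1 / (2 * p)) * Lσ + t ^ (1 / p) * Lb

/-- The constant `C_{p,T} = (1 - C(p,T/n))^{-np}`. -/
def CpT (Cp Lσ Lb p T : ℝ) (n : ℕ) : ℝ :=
  (1 - Cconst Cp Lσ Lb p (T / n)) ^ (-((n : ℝ) * p))

/-- The constant `γ_T = L_K T C_{1,T}`. -/
def gammaT (C1 Lσ LK T : ℝ) (n : ℕ) : ℝ := LK * T * CpT C1 Lσ LK 1 T n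

end Defs

/-! Summing the product rule `∂_β(σ^α σ^β) = σ^β ∂_β σ^α + σ^α ∂_β σ^β` over `β` and then over
the noise index `k` expresses `∑ₖ (Dσₖ·σₖ)^α` through the derivative of the diagonal covariance
and `∑ₖ σₖ^α div σₖ`; both vanish when the `σₖ` are divergence free and `Q(x,x)` is constant. -/

section VectorField

variable {ι : Type*} [Fintype ι]

theorem fderiv_coord_mul_coord {f : EuclideanSpace ℝ ι → EuclideanSpace ℝ ι}
    {x : EuclideanSpace ℝ ι} (hf : DifferentiableAt ℝ f x) (α β : ι) (v : EuclideanSpace ℝ ι) :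
    fderiv ℝ (fun z => f z α * f z β) x v
      = f x β * fderiv ℝ (fun y => f y α) x v + f x α * fderiv ℝ (fun y => f y β) x v := by
  have hcoord : ∀ γ, DifferentiableAt ℝ (fun y => f y γ) x := fun γ =>
    ((EuclideanSpace.proj γ : EuclideanSpace ℝ ι →L[ℝ] ℝ).differentiableAt.comp x hf :)
  rw [fderiv_fun_mul (hcoord α) (hcoord β)]
  simp only [add_apply, smul_apply, smul_eq_mul]
  ring

variable [DecidableEq ι]

/-- `(Df · f)^α` in the paper's notation. -/
def convectiveDeriv (f : EuclideanSpace ℝ ι → EuclideanSpace ℝ ι) (x : EuclideanSpace ℝ ι)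
    (α : ι) : ℝ :=
  ∑ β, f x β * fderiv ℝ (fun y => f y α) x (EuclideanSpace.single β 1)

def divergence (f : EuclideanSpace ℝ ι → EuclideanSpace ℝ ι) (x : EuclideanSpace ℝ ι) : ℝ :=
  ∑ β, fderiv ℝ (fun y => f y β) x (EuclideanSpace.single β 1)

theorem sum_fderiv_coord_mul_coord {f : EuclideanSpace ℝ ι → EuclideanSpace ℝ ι}
    {x : EuclideanSpace ℝ ι} (hf : DifferentiableAt ℝ f x) (α : ι) :
    ∑ β, fderiv ℝ (fun z => f z α * f z β) x (EuclideanSpace.single β 1)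
      = convectiveDeriv f x α + f x α * divergence f x := by
  simp only [fderiv_coord_mul_coord hf, Finset.sum_add_distrib, convectiveDeriv, divergence,
    Finset.mul_sum]

theorem tsum_convectiveDeriv_eq {σs : ℕ → EuclideanSpace ℝ ι → EuclideanSpace ℝ ι}
    {x : EuclideanSpace ℝ ι} {α : ι} {c : ι → ℝ} (hσ : ∀ k, DifferentiableAt ℝ (σs k) x)
    (hc : ∀ β, HasSum (fun k => fderiv ℝ (fun z => σs k z α * σs k z β) x
      (EuclideanSpace.single β 1)) (c β))
    (hconv : Summable fun k => convectiveDeriv (σs k) x α)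
    (hdiv : Summable fun k => σs k x α * divergence (σs k) x) :
    ∑' k, convectiveDeriv (σs k) x α = ∑ β, c β - ∑' k, σs k x α * divergence (σs k) x := by
  have hsum : HasSum (fun k => convectiveDeriv (σs k) x α + σs k x α * divergence (σs k) x)
      (∑ β, c β) := by
    convert hasSum_sum fun β (_ : β ∈ Finset.univ) => hc β with k
    exact (sum_fderiv_coord_mul_coord (hσ k) α).symm
  rw [← hsum.tsum_eq, hconv.tsum_add hdiv]
  ring

end VectorField

theorem stmt_5_general (d : ℕ) (σs : ℕ → Vec d → Vec d)
    (hC1 : ∀ k, ContDiff ℝ 1 (σs k))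
    (Q : Vec d → Vec d → Fin d → Fin d → ℝ)
    (hQderiv : ∀ (α β : Fin d) (x v : Vec d),
      HasSum (fun k => fderiv ℝ (fun z => σs k z α * σs k z β) x v)
        (fderiv ℝ (fun z => Q z z α β) x v))
    (hsum1 : ∀ (x : Vec d) (α : Fin d),
      Summable fun k =>
        ∑ β, σs k x β * fderiv ℝ (fun y => σs k y α) x (EuclideanSpace.single β 1))
    (hsum2 : ∀ (x : Vec d) (α : Fin d),
      Summable fun k =>
        σs k x α * ∑ β, fderiv ℝ (fun y => σs k y β) x (EuclideanSpace.single β 1)) :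
    (∀ (x : Vec d) (α : Fin d),
      (∑' k, ∑ β, σs k x β * fderiv ℝ (fun y => σs k y α) x (EuclideanSpace.single β 1))
        = (∑ β, fderiv ℝ (fun z => Q z z α β) x (EuclideanSpace.single β 1))
          - ∑' k, σs k x α *
              ∑ β, fderiv ℝ (fun y => σs k y β) x (EuclideanSpace.single β 1)) ∧
    ((∀ (k : ℕ) (x : Vec d),
        ∑ β, fderiv ℝ (fun y => σs k y β) x (EuclideanSpace.single β 1) = 0) →
      (∀ (x y : Vec d) (α β : Fin d), Q x x α β = Q y y α β) →
      ∀ (x : Vec d) (α : Fin d),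
        (∑' k, ∑ β, σs k x β * fderiv ℝ (fun y => σs k y α) x (EuclideanSpace.single β 1))
          = 0) := by
  have identity : ∀ (x : Vec d) (α : Fin d),
      ∑' k, convectiveDeriv (σs k) x α
        = ∑ β, fderiv ℝ (fun z => Q z z α β) x (EuclideanSpace.single β 1)
          - ∑' k, σs k x α * divergence (σs k) x := fun x α =>
    tsum_convectiveDeriv_eq (fun k => (hC1 k).differentiable one_ne_zero x)
      (fun β => hQderiv α β x _) (hsum1 x α) (hsum2 x α)
  refine ⟨identity, fun hdiv hconst x α => ?_⟩
  have hQconst : ∀ β, fderiv ℝ (fun z => Q z z α β) x = 0 := fun β => by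
    rw [show (fun z => Q z z α β) = fun _ => Q x x α β from funext fun z => hconst z x α β,
      fderiv_fun_const, Pi.zero_apply]
  have hdiv' : ∀ k, divergence (σs k) x = 0 := fun k => hdiv k x
  show ∑' k, convectiveDeriv (σs k) x α = 0
  simp only [identity x α, hQconst, hdiv', zero_apply, Finset.sum_const_zero, mul_zero, tsum_zero,
    sub_zero]

/-- identity behind the Itô–Stratonovich correction: for `C¹` fields
`σₖ` whose covariance series `Q^{αβ}(x,y) = ∑ₖ σₖ^α(x) σₖ^β(y)` converges together with
its first derivatives, one has, for every `α` and `x`,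
`∑ₖ ∑_β σₖ^β ∂_β σₖ^α = ∑_β ∂_β Q^{αβ}(x,x) − ∑ₖ σₖ^α div σₖ`
(`∂_β Q^{αβ}(x,x)` denoting the `β`-th derivative of the covariance evaluated on the
diagonal, i.e. of `z ↦ Q^{αβ}(z,z)`). In particular, if every `σₖ` is divergence free and
the diagonal values `Q^{αβ}(x,x)` are constant in `x`, the Stratonovich–Itô correction
vanishes: `∑ₖ (Dσₖ·σₖ)(x) = 0`. -/
theorem stmt_5 (d : ℕ) (σs : ℕ → Vec d → Vec d)
    (hC1 : ∀ k, ContDiff ℝ 1 (σs k))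
    (Q : Vec d → Vec d → Fin d → Fin d → ℝ)
    (hQ : ∀ (x y : Vec d) (α β : Fin d),
      HasSum (fun k => σs k x α * σs k y β) (Q x y α β))
    -- the series of first derivatives converges suitably:
    (hQdiff : ∀ α β : Fin d, Differentiable ℝ fun z : Vec d => Q z z α β)
    (hQderiv : ∀ (α β : Fin d) (x v : Vec d),
      HasSum (fun k => fderiv ℝ (fun z => σs k z α * σs k z β) x v)
        (fderiv ℝ (fun z => Q z z α β) x v))
    (hsum1 : ∀ (x : Vec d) (α : Fin d),
      Summable fun k =>
        ∑ β, σs k x β * fderiv ℝ (fun y => σs k y α) x (EuclideanSpace.single β 1))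
    (hsum2 : ∀ (x : Vec d) (α : Fin d),
      Summable fun k =>
        σs k x α * ∑ β, fderiv ℝ (fun y => σs k y β) x (EuclideanSpace.single β 1)) :
    (∀ (x : Vec d) (α : Fin d),
      (∑' k, ∑ β, σs k x β * fderiv ℝ (fun y => σs k y α) x (EuclideanSpace.single β 1))
        = (∑ β, fderiv ℝ (fun z => Q z z α β) x (EuclideanSpace.single β 1))
          - ∑' k, σs k x α *
              ∑ β, fderiv ℝ (fun y => σs k y β) x (EuclideanSpace.single β 1)) ∧
    ((∀ (k : ℕ) (x : Vec d),
        ∑ β, fderiv ℝ (fun y => σs k y β) x (EuclideanSpace.single β 1) = 0) →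
      (∀ (x y : Vec d) (α β : Fin d), Q x x α β = Q y y α β) →
      ∀ (x : Vec d) (α : Fin d),
        (∑' k, ∑ β, σs k x β * fderiv ℝ (fun y => σs k y α) x (EuclideanSpace.single β 1))
          = 0) :=
  stmt_5_general d σs hC1 Q hQderiv hsum1 hsum2
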